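/- Let a ≥ 0 and N_a = {(z₁,z₂,z₃) ∈ ℂ³ : |z₁|² − 2a = |z₂|² = |z₃|², Im(z₁z₂z₃) = 0, Re(z₁z₂z₃) ≥ 0}. Then Im(dz₁∧dz₂∧dz₃) vanishes on every tangent space at smooth points of N_a; combined with ω|_{N_a} ≡ 0, N_a is special Lagrangian at its smooth points. -/

import Mathlib

open Complex

/-- The standard Kähler form ω of ℂ³ evaluated on a pair of tangent vectors. -/
noncomputable def stdKahlerForm (w z : ℂ × ℂ × ℂ) : ℝ :=
  ((starRingEnd ℂ w.1) * z.1 + (starRingEnd ℂ w.2.1) * z.2.1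
    + (starRingEnd ℂ w.2.2) * z.2.2).im

/-- The holomorphic volume form Ω = dz₁∧dz₂∧dz₃ of ℂ³ evaluated on a triple of
tangent vectors (a 3×3 complex determinant). -/
noncomputable def holVolForm (w₁ w₂ w₃ : ℂ × ℂ × ℂ) : ℂ :=
  Matrix.det !![w₁.1, w₁.2.1, w₁.2.2; w₂.1, w₂.2.1, w₂.2.2; w₃.1, w₃.2.1, w₃.2.2]

/-- The Harvey–Lawson U(1)²-invariant set N_a ⊂ ℂ³. -/
def HLset (a : ℝ) : Set (ℂ × ℂ × ℂ) :=
  {p | ‖p.1‖ ^ 2 - 2 * a = ‖p.2.1‖ ^ 2 ∧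
       ‖p.2.1‖ ^ 2 = ‖p.2.2‖ ^ 2 ∧
       (p.1 * p.2.1 * p.2.2).im = 0 ∧ 0 ≤ (p.1 * p.2.1 * p.2.2).re}

/-!
At a nonzero point p of N_a we exhibit three real vectors e₀, e₁, e₂ whose real span contains
the tangent cone and on which ω and Im Ω vanish. This suffices: ω is bilinear, and if
wᵢ = ∑ⱼ cᵢⱼ eⱼ with cᵢⱼ real then Ω(w₁, w₂, w₃) = det(c) · Ω(e₀, e₁, e₂).

If all pₖ ≠ 0, linearizing |z₁|² - 2a = |z₂|² = |z₃|² shows that Re(p̄ₖ wₖ) is a common value ρ,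
and linearizing Im(z₁z₂z₃) = 0 at a point where z₁z₂z₃ is real and nonzero gives
∑ₖ Im(wₖ/pₖ) = 0. Hence wₖ = pₖ(ρ/|pₖ|² + i sₖ) with s₁ + s₂ + s₃ = 0.

If p₂ = p₃ = 0 these equations only force Re(p̄₁ w₁) = 0. The missing constraint comes from the
identity ‖z₁‖ z₃ = conj(z₁z₂), valid on all of N_a, whose linearization at p is
‖p₁‖ w₃ = conj(p₁ w₂).
-/

open ComplexConjugate
open scoped ComplexOrder

theorem HasFDerivAt.apply_eq_zero_of_mem_tangentConeAt {𝕜 E F : Type*}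
    [NontriviallyNormedField 𝕜] [NormedAddCommGroup E] [NormedSpace 𝕜 E]
    [NormedAddCommGroup F] [NormedSpace 𝕜 F] {f : E → F} {f' : E →L[𝕜] F}
    {s : Set E} {x v : E} (hf : HasFDerivAt f f' x) (hs : ∀ y ∈ s, f y = f x)
    (hv : v ∈ tangentConeAt 𝕜 s x) : f' v = 0 := by
  have himage : f '' s ⊆ {f x} := by
    rintro _ ⟨y, hy, rfl⟩
    exact hs y hy
  refine tangentConeAt_subset_zero ?_ <|
    tangentConeAt_mono himage (hf.hasFDerivWithinAt.mapsTo_tangent_cone hv)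
  rw [accPt_iff_nhds]
  simpa using ⟨Set.univ, Filter.univ_mem⟩

namespace Complex

theorem eq_conj_of_normSq_eq_of_nonneg_mul {ξ η : ℂ} (hnorm : normSq ξ = normSq η)
    (hmul : 0 ≤ ξ * η) : η = conj ξ := by
  rcases eq_or_ne ξ 0 with rfl | hξ
  · rw [map_zero]
    exact normSq_eq_zero.1 (by simpa using hnorm.symm)
  · have hη : ‖η‖ = ‖ξ‖ := (sq_eq_sq₀ (norm_nonneg _) (norm_nonneg _)).1
      (by simpa [normSq_eq_norm_sq] using hnorm.symm)
    refine mul_left_cancel₀ hξ ?_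
    rw [eq_coe_norm_of_nonneg hmul, mul_conj, norm_mul, hη, normSq_eq_norm_sq, sq]

theorem eq_inner_smul_add_im_div_smul {q : ℂ} (hq : q ≠ 0) (v : ℂ) :
    v = inner ℝ q v • (conj q)⁻¹ + (v / q).im • (I * q) := by
  obtain ⟨ζ, rfl⟩ : ∃ ζ, v = q * ζ := ⟨v / q, by field_simp⟩
  have hcq : conj q ≠ 0 := by simpa using hq
  rw [mul_div_cancel_left₀ _ hq, Complex.inner, mul_right_comm, mul_conj, re_ofReal_mul,
    real_smul, real_smul, ofReal_mul, ← mul_conj]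
  field_simp
  conv_lhs => rw [← re_add_im ζ]

end Complex

theorem holVolForm_sum_smul (c₁ c₂ c₃ : Fin 3 → ℝ) (e : Fin 3 → ℂ × ℂ × ℂ) :
    holVolForm (∑ j, c₁ j • e j) (∑ j, c₂ j • e j) (∑ j, c₃ j • e j)
      = ((Matrix.of ![c₁, c₂, c₃]).det : ℂ) * holVolForm (e 0) (e 1) (e 2) := by
  have hrows : !![(∑ j, c₁ j • e j).1, (∑ j, c₁ j • e j).2.1, (∑ j, c₁ j • e j).2.2;
      (∑ j, c₂ j • e j).1, (∑ j, c₂ j • e j).2.1, (∑ j, c₂ j • e j).2.2;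
      (∑ j, c₃ j • e j).1, (∑ j, c₃ j • e j).2.1, (∑ j, c₃ j • e j).2.2]
      = (Matrix.of ![c₁, c₂, c₃]).map ((↑) : ℝ → ℂ) *
        !![(e 0).1, (e 0).2.1, (e 0).2.2; (e 1).1, (e 1).2.1, (e 1).2.2;
          (e 2).1, (e 2).2.1, (e 2).2.2] := by
    ext i j
    fin_cases i <;> fin_cases j <;> simp [Matrix.mul_apply, Fin.sum_univ_three, real_smul]
  rw [holVolForm, holVolForm, hrows, Matrix.det_mul]
  exact congrArg (· * _) (RingHom.map_det ofRealHom (Matrix.of ![c₁, c₂, c₃])).symm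

noncomputable def stdKahlerBilin : (ℂ × ℂ × ℂ) →ₗ[ℝ] (ℂ × ℂ × ℂ) →ₗ[ℝ] ℝ :=
  LinearMap.mk₂ ℝ stdKahlerForm
    (fun w w' z => by
      simp only [stdKahlerForm, Prod.fst_add, Prod.snd_add, map_add, add_mul, add_im]
      ring)
    (fun c w z => by
      simp only [stdKahlerForm, Prod.smul_fst, Prod.smul_snd, real_smul, map_mul, conj_ofReal,
        mul_assoc, ← mul_add, im_ofReal_mul, smul_eq_mul])
    (fun w z z' => by
      simp only [stdKahlerForm, Prod.fst_add, Prod.snd_add, mul_add, add_im]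
      ring)
    (fun c w z => by
      simp only [stdKahlerForm, Prod.smul_fst, Prod.smul_snd, real_smul, mul_left_comm _ (c : ℂ),
        ← mul_add, im_ofReal_mul, smul_eq_mul])

theorem stdKahlerForm_self (w : ℂ × ℂ × ℂ) : stdKahlerForm w w = 0 := by
  simp only [stdKahlerForm, conj_mul', ← ofReal_pow, ← ofReal_add, ofReal_im]

theorem stdKahlerForm_swap (w z : ℂ × ℂ × ℂ) : stdKahlerForm z w = -stdKahlerForm w z := by
  simp only [stdKahlerForm, add_im, mul_im, conj_re, conj_im]
  ring

def IsSpecialLagrangianFrame (e : Fin 3 → ℂ × ℂ × ℂ) : Prop :=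
  (holVolForm (e 0) (e 1) (e 2)).im = 0 ∧ ∀ i j, stdKahlerForm (e i) (e j) = 0

namespace IsSpecialLagrangianFrame

variable {e : Fin 3 → ℂ × ℂ × ℂ}

theorem mk' (hΩ : (holVolForm (e 0) (e 1) (e 2)).im = 0) (h₀₁ : stdKahlerForm (e 0) (e 1) = 0)
    (h₀₂ : stdKahlerForm (e 0) (e 2) = 0) (h₁₂ : stdKahlerForm (e 1) (e 2) = 0) :
    IsSpecialLagrangianFrame e := by
  refine ⟨hΩ, fun i j => ?_⟩
  fin_cases i <;> fin_cases j
  all_goals first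
    | exact stdKahlerForm_self _
    | assumption
    | rw [stdKahlerForm_swap]; simpa

theorem im_holVolForm_eq_zero (he : IsSpecialLagrangianFrame e) {w₁ w₂ w₃ : ℂ × ℂ × ℂ}
    (h₁ : w₁ ∈ Submodule.span ℝ (Set.range e)) (h₂ : w₂ ∈ Submodule.span ℝ (Set.range e))
    (h₃ : w₃ ∈ Submodule.span ℝ (Set.range e)) : (holVolForm w₁ w₂ w₃).im = 0 := by
  obtain ⟨c₁, rfl⟩ := (Submodule.mem_span_range_iff_exists_fun ℝ).1 h₁
  obtain ⟨c₂, rfl⟩ := (Submodule.mem_span_range_iff_exists_fun ℝ).1 h₂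
  obtain ⟨c₃, rfl⟩ := (Submodule.mem_span_range_iff_exists_fun ℝ).1 h₃
  rw [holVolForm_sum_smul c₁ c₂ c₃ e, im_ofReal_mul, he.1, mul_zero]

theorem stdKahlerForm_eq_zero (he : IsSpecialLagrangianFrame e) {w z : ℂ × ℂ × ℂ}
    (hw : w ∈ Submodule.span ℝ (Set.range e)) (hz : z ∈ Submodule.span ℝ (Set.range e)) :
    stdKahlerForm w z = 0 := by
  have hleft : ∀ i, Submodule.span ℝ (Set.range e) ≤ LinearMap.ker (stdKahlerBilin (e i)) :=
    fun i => Submodule.span_le.2 <| Set.range_subset_iff.2 fun j => he.2 i j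
  have hright : Submodule.span ℝ (Set.range e) ≤ LinearMap.ker (stdKahlerBilin.flip z) :=
    Submodule.span_le.2 <| Set.range_subset_iff.2 fun i => hleft i hz
  exact hright hw

end IsSpecialLagrangianFrame

-- Spans the vectors (pₖ (ρ / |pₖ|² + i sₖ))ₖ with ρ, sₖ real and s₁ + s₂ + s₃ = 0.
noncomputable def genericFrame (p : ℂ × ℂ × ℂ) : Fin 3 → ℂ × ℂ × ℂ :=
  ![((conj p.1)⁻¹, (conj p.2.1)⁻¹, (conj p.2.2)⁻¹), (I * p.1, 0, -(I * p.2.2)),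
    (0, I * p.2.1, -(I * p.2.2))]

theorem isSpecialLagrangianFrame_genericFrame {p : ℂ × ℂ × ℂ} (h₁ : p.1 ≠ 0) (h₂ : p.2.1 ≠ 0)
    (h₃ : p.2.2 ≠ 0) (him : (p.1 * p.2.1 * p.2.2).im = 0) :
    IsSpecialLagrangianFrame (genericFrame p) := by
  have hΩ : holVolForm (genericFrame p 0) (genericFrame p 1) (genericFrame p 2)
      = -(p.1 * p.2.1 * p.2.2) * ((normSq p.1)⁻¹ + (normSq p.2.1)⁻¹ + (normSq p.2.2)⁻¹ : ℝ) := by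
    simp only [holVolForm, genericFrame, Matrix.det_fin_three, Matrix.of_apply, Matrix.cons_val',
      Matrix.cons_val_zero, Matrix.cons_val_one, Matrix.cons_val, Matrix.cons_val_fin_one, mul_zero,
      zero_mul, mul_neg, neg_mul, sub_zero, sub_neg_eq_add, add_zero, ofReal_add, ofReal_inv,
      ← mul_conj]
    field_simp
    simp only [I_sq]
    ring
  refine .mk' ?_ ?_ ?_ ?_
  · rw [hΩ, mul_im, ofReal_im, ofReal_re, neg_im, him]
    ring
  · simp only [stdKahlerForm, genericFrame, Matrix.cons_val_zero, Matrix.cons_val_one, map_inv₀,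
      conj_conj, mul_zero, add_zero, mul_neg]
    convert zero_im using 2
    field_simp
    ring
  · simp only [stdKahlerForm, genericFrame, Matrix.cons_val_zero, Matrix.cons_val, map_inv₀,
      conj_conj, mul_zero, zero_add, mul_neg]
    convert zero_im using 2
    field_simp
    ring
  · simp only [stdKahlerForm, genericFrame, Matrix.cons_val_one, Matrix.cons_val_zero,
      Matrix.cons_val, map_zero, mul_zero, zero_mul, zero_add, conj_mul', ← ofReal_pow, ofReal_im]

-- Spans the vectors (i t q, x, conj (q x) / ‖q‖) with t real and x complex.
noncomputable def degenerateFrame (q : ℂ) : Fin 3 → ℂ × ℂ × ℂ :=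
  ![(I * q, 0, 0), (0, ‖q‖, conj q), (0, I * ‖q‖, -(I * conj q))]

theorem isSpecialLagrangianFrame_degenerateFrame (q : ℂ) :
    IsSpecialLagrangianFrame (degenerateFrame q) := by
  have hΩ : holVolForm (degenerateFrame q 0) (degenerateFrame q 1) (degenerateFrame q 2)
      = (2 * ‖q‖ * normSq q : ℝ) := by
    simp only [holVolForm, degenerateFrame, Matrix.det_fin_three, Matrix.of_apply,
      Matrix.cons_val', Matrix.cons_val_zero, Matrix.cons_val_one, Matrix.cons_val,
      Matrix.cons_val_fin_one, mul_zero, zero_mul, mul_neg, sub_zero, add_zero, ofReal_mul,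
      ofReal_ofNat, ← mul_conj]
    linear_combination (-2 * (‖q‖ : ℂ) * q * conj q) * I_mul_I
  refine .mk' ?_ ?_ ?_ ?_
  · rw [hΩ, ofReal_im]
  · simp [stdKahlerForm, degenerateFrame]
  · simp [stdKahlerForm, degenerateFrame]
  · simp only [stdKahlerForm, degenerateFrame, Matrix.cons_val_one, Matrix.cons_val_zero,
      Matrix.cons_val, map_zero, mul_zero, zero_add, conj_ofReal, conj_conj, mul_neg]
    convert zero_im using 2
    rw [mul_left_comm q, mul_conj']
    ring

namespace HLset

variable {a : ℝ} {p w : ℂ × ℂ × ℂ}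

theorem inner_eq_of_mem_tangentConeAt (hp : p ∈ HLset a)
    (hw : w ∈ tangentConeAt ℝ (HLset a) p) :
    inner ℝ p.1 w.1 = inner ℝ p.2.1 w.2.1 ∧ inner ℝ p.2.1 w.2.1 = inner ℝ p.2.2 w.2.2 := by
  have h₁ := hasFDerivAt_fst (𝕜 := ℝ) (p := p)
  have h₂ := (hasFDerivAt_snd (𝕜 := ℝ) (p := p)).fst
  have h₃ := (hasFDerivAt_snd (𝕜 := ℝ) (p := p)).snd
  constructor
  · have := (h₁.norm_sq.sub h₂.norm_sq).apply_eq_zero_of_mem_tangentConeAt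
      (fun y hy => by simp only [Pi.sub_apply]; linarith [hy.1, hp.1]) hw
    simp only [sub_apply, smul_apply, ContinuousLinearMap.comp_apply, ContinuousLinearMap.coe_fst',
      ContinuousLinearMap.coe_snd', coe_innerSL_apply, nsmul_eq_mul, Nat.cast_ofNat] at this
    linarith
  · have := (h₂.norm_sq.sub h₃.norm_sq).apply_eq_zero_of_mem_tangentConeAt
      (fun y hy => by simp only [Pi.sub_apply]; linarith [hy.2.1, hp.2.1]) hw
    simp only [sub_apply, smul_apply, ContinuousLinearMap.comp_apply, ContinuousLinearMap.coe_fst',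
      ContinuousLinearMap.coe_snd', coe_innerSL_apply, nsmul_eq_mul, Nat.cast_ofNat] at this
    linarith

theorem im_add_mul_eq_zero_of_mem_tangentConeAt (hp : p ∈ HLset a)
    (hw : w ∈ tangentConeAt ℝ (HLset a) p) :
    (w.1 * p.2.1 * p.2.2 + p.1 * w.2.1 * p.2.2 + p.1 * p.2.1 * w.2.2).im = 0 := by
  have h₁ := hasFDerivAt_fst (𝕜 := ℝ) (p := p)
  have h₂ := (hasFDerivAt_snd (𝕜 := ℝ) (p := p)).fst
  have h₃ := (hasFDerivAt_snd (𝕜 := ℝ) (p := p)).snd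
  have := (imCLM.hasFDerivAt.comp p ((h₁.mul h₂).mul h₃)).apply_eq_zero_of_mem_tangentConeAt
      (fun y hy => by simp [hy.2.2.1, hp.2.2.1]) hw
  simp only [Pi.mul_apply, smul_add, ContinuousLinearMap.comp_add, add_apply,
    ContinuousLinearMap.comp_apply, smul_apply, ContinuousLinearMap.coe_fst',
    ContinuousLinearMap.coe_snd', smul_eq_mul, imCLM_apply] at this
  rw [← add_im, ← add_im] at this
  rw [← this]
  congr 1
  ring

theorem norm_mul_eq_conj_of_mem {y : ℂ × ℂ × ℂ} (hy : y ∈ HLset a) :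
    (‖y.1‖ : ℂ) * y.2.2 = conj (y.1 * y.2.1) := by
  apply eq_conj_of_normSq_eq_of_nonneg_mul
  · simp only [normSq_eq_norm_sq, norm_mul, norm_real, Real.norm_eq_abs, abs_norm, mul_pow, hy.2.1]
  · have h : 0 ≤ y.1 * y.2.1 * y.2.2 := nonneg_iff.2 ⟨hy.2.2.2, hy.2.2.1.symm⟩
    calc (0 : ℂ) ≤ ‖y.1‖ * (y.1 * y.2.1 * y.2.2) := mul_nonneg (zero_le_real.2 (norm_nonneg _)) h
      _ = y.1 * y.2.1 * (‖y.1‖ * y.2.2) := by ring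

theorem norm_mul_eq_conj_of_mem_tangentConeAt (h₁ : p.1 ≠ 0) (h₂ : p.2.1 = 0) (h₃ : p.2.2 = 0)
    (hw : w ∈ tangentConeAt ℝ (HLset a) p) :
    (‖p.1‖ : ℂ) * w.2.2 = conj (p.1 * w.2.1) := by
  have d₁ := hasFDerivAt_fst (𝕜 := ℝ) (p := p)
  have d₂ := (hasFDerivAt_snd (𝕜 := ℝ) (p := p)).fst
  have d₃ := (hasFDerivAt_snd (𝕜 := ℝ) (p := p)).snd
  have := ((conjCLE.hasFDerivAt.comp p (d₁.mul d₂)).sub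
    ((d₁.differentiableAt.norm ℝ h₁).hasFDerivAt.smul d₃)).apply_eq_zero_of_mem_tangentConeAt
      (fun y hy => ?_) hw
  · simp only [h₂, h₃, ContinuousLinearMap.comp_add, ContinuousLinearMap.smulRight_zero, add_zero,
      sub_apply, add_apply, ContinuousLinearMap.comp_apply, smul_apply,
      ContinuousLinearMap.coe_snd', ContinuousLinearMap.coe_fst', smul_eq_mul,
      ContinuousLinearEquiv.coe_coe, ContinuousAlgEquiv.coeCLE_apply, conjCAE_apply, zero_mul,
      map_zero, real_smul] at this
    linear_combination -this
  · show conj (y.1 * y.2.1) - ‖y.1‖ • y.2.2 = conj (p.1 * p.2.1) - ‖p.1‖ • p.2.2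
    rw [real_smul, real_smul, norm_mul_eq_conj_of_mem hy, h₂, h₃]
    simp

theorem tangentConeAt_subset_span_genericFrame (hp : p ∈ HLset a) (h₁ : p.1 ≠ 0)
    (h₂ : p.2.1 ≠ 0) (h₃ : p.2.2 ≠ 0) :
    tangentConeAt ℝ (HLset a) p ⊆ Submodule.span ℝ (Set.range (genericFrame p)) := by
  intro w hw
  obtain ⟨h₁₂, h₂₃⟩ := inner_eq_of_mem_tangentConeAt hp hw
  have hsum : (w.1 / p.1).im + (w.2.1 / p.2.1).im + (w.2.2 / p.2.2).im = 0 := by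
    have hprod : p.1 * p.2.1 * p.2.2 ≠ 0 := by simp [h₁, h₂, h₃]
    have := im_add_mul_eq_zero_of_mem_tangentConeAt hp hw
    rw [show w.1 * p.2.1 * p.2.2 + p.1 * w.2.1 * p.2.2 + p.1 * p.2.1 * w.2.2
        = p.1 * p.2.1 * p.2.2 * (w.1 / p.1 + w.2.1 / p.2.1 + w.2.2 / p.2.2) by field_simp,
      mul_im, hp.2.2.1, zero_mul, add_zero] at this
    have hre : (p.1 * p.2.1 * p.2.2).re ≠ 0 := fun h => hprod (Complex.ext h hp.2.2.1)
    simpa only [add_im] using (mul_eq_zero.1 this).resolve_left hre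
  have hw_eq : w = inner ℝ p.1 w.1 • genericFrame p 0 + (w.1 / p.1).im • genericFrame p 1
      + (w.2.1 / p.2.1).im • genericFrame p 2 := by
    refine Prod.ext ?_ (Prod.ext ?_ ?_)
    · simpa [genericFrame] using eq_inner_smul_add_im_div_smul h₁ w.1
    · simpa [genericFrame, h₁₂] using eq_inner_smul_add_im_div_smul h₂ w.2.1
    · have him₃ : (w.2.2 / p.2.2).im = -(w.1 / p.1).im - (w.2.1 / p.2.1).im := by linarith
      conv_lhs => rw [eq_inner_smul_add_im_div_smul h₃ w.2.2, him₃, ← h₂₃, ← h₁₂]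
      simp only [genericFrame, Matrix.cons_val_zero, Matrix.cons_val_one, Matrix.cons_val,
        Prod.smul_mk, Prod.mk_add_mk, smul_neg, real_smul, ofReal_sub, ofReal_neg]
      ring
  rw [hw_eq]
  exact add_mem (add_mem (Submodule.smul_mem _ _ (Submodule.subset_span ⟨0, rfl⟩))
    (Submodule.smul_mem _ _ (Submodule.subset_span ⟨1, rfl⟩)))
    (Submodule.smul_mem _ _ (Submodule.subset_span ⟨2, rfl⟩))

theorem tangentConeAt_subset_span_degenerateFrame (hp : p ∈ HLset a) (h₁ : p.1 ≠ 0)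
    (h₂ : p.2.1 = 0) (h₃ : p.2.2 = 0) :
    tangentConeAt ℝ (HLset a) p ⊆ Submodule.span ℝ (Set.range (degenerateFrame p.1)) := by
  intro w hw
  have hinner : inner ℝ p.1 w.1 = 0 := by
    simpa [h₂] using (inner_eq_of_mem_tangentConeAt hp hw).1
  have hconj := norm_mul_eq_conj_of_mem_tangentConeAt h₁ h₂ h₃ hw
  have hnorm : (‖p.1‖ : ℂ) ≠ 0 := by simpa using h₁
  have hw_eq : w = (w.1 / p.1).im • degenerateFrame p.1 0
      + (w.2.1.re / ‖p.1‖) • degenerateFrame p.1 1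
      + (w.2.1.im / ‖p.1‖) • degenerateFrame p.1 2 := by
    refine Prod.ext ?_ (Prod.ext ?_ ?_)
    · simpa [degenerateFrame, hinner] using eq_inner_smul_add_im_div_smul h₁ w.1
    · simp only [degenerateFrame, Matrix.cons_val_zero, Matrix.cons_val_one, Matrix.cons_val,
        Prod.smul_mk, Prod.mk_add_mk, smul_zero, zero_add, real_smul, ofReal_div]
      field_simp
      exact (re_add_im _).symm
    · refine mul_left_cancel₀ hnorm ?_
      rw [hconj, map_mul]
      simp only [degenerateFrame, Matrix.cons_val_zero, Matrix.cons_val_one, Matrix.cons_val,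
        Prod.smul_mk, Prod.mk_add_mk, smul_zero, smul_neg, zero_add, real_smul, ofReal_div]
      field_simp
      congr 1
      apply Complex.ext <;> simp
  rw [hw_eq]
  exact add_mem (add_mem (Submodule.smul_mem _ _ (Submodule.subset_span ⟨0, rfl⟩))
    (Submodule.smul_mem _ _ (Submodule.subset_span ⟨1, rfl⟩)))
    (Submodule.smul_mem _ _ (Submodule.subset_span ⟨2, rfl⟩))

theorem exists_isSpecialLagrangianFrame (ha : 0 ≤ a) (hp : p ∈ HLset a) (hp₀ : p ≠ 0) :
    ∃ e, IsSpecialLagrangianFrame e ∧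
      tangentConeAt ℝ (HLset a) p ⊆ Submodule.span ℝ (Set.range e) := by
  have h₂₃ : p.2.1 = 0 ↔ p.2.2 = 0 := by
    rw [← norm_eq_zero, ← sq_eq_zero_iff, hp.2.1, sq_eq_zero_iff, norm_eq_zero]
  by_cases h₂ : p.2.1 = 0
  · have h₃ := h₂₃.1 h₂
    have h₁ : p.1 ≠ 0 := fun h₁ => hp₀ (Prod.ext h₁ (Prod.ext h₂ h₃))
    exact ⟨_, isSpecialLagrangianFrame_degenerateFrame p.1,
      tangentConeAt_subset_span_degenerateFrame hp h₁ h₂ h₃⟩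
  · have h₃ : p.2.2 ≠ 0 := mt h₂₃.2 h₂
    have h₁ : p.1 ≠ 0 := by
      intro h₁
      have hnorm := hp.1
      rw [h₁, norm_zero] at hnorm
      nlinarith [norm_pos_iff.2 h₂]
    exact ⟨_, isSpecialLagrangianFrame_genericFrame h₁ h₂ h₃ hp.2.2.1,
      tangentConeAt_subset_span_genericFrame hp h₁ h₂ h₃⟩

end HLset

theorem stmt9 (a : ℝ) (ha : 0 ≤ a) :
    ∀ p ∈ HLset a, p ≠ 0 →
      (∀ w₁ ∈ tangentConeAt ℝ (HLset a) p, ∀ w₂ ∈ tangentConeAt ℝ (HLset a) p,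
        ∀ w₃ ∈ tangentConeAt ℝ (HLset a) p, (holVolForm w₁ w₂ w₃).im = 0) ∧
      (∀ w ∈ tangentConeAt ℝ (HLset a) p, ∀ z ∈ tangentConeAt ℝ (HLset a) p,
        stdKahlerForm w z = 0) := by
  intro p hp hp₀
  obtain ⟨e, he, hspan⟩ := HLset.exists_isSpecialLagrangianFrame ha hp hp₀
  exact ⟨fun w₁ h₁ w₂ h₂ w₃ h₃ => he.im_holVolForm_eq_zero (hspan h₁) (hspan h₂) (hspan h₃),
    fun w hw z hz => he.stdKahlerForm_eq_zero (hspan hw) (hspan hz)⟩
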